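/- arXiv:2208.11832 — 3 statements merged into one kernel-verified Lean document; each statement's English description precedes it below -/
import Mathlib

section
/- For every real number t ≥ 1, we have 1 - (1 - 1/t)^t ≥ 1 - 1/e + 1/(32 t^2). -/
/-!
Put `x = 1/t ∈ (0, 1]`. Keeping the quadratic term of the series `-log (1 - x) = ∑ xⁿ/n` gives
`1 - x ≤ exp (-x - x²/2)`, so `(1 - 1/t)^t ≤ exp (-1 - x/2) = e⁻¹ exp (-x/2)`. Since
`exp (-y) ≤ 1/(1 + y) ≤ 1 - y + y²`, the factor `exp (-x/2)` is at most `1 - x/2 + x²/4`,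
and `e⁻¹ (x/2 - x²/4) ≥ x²/12 ≥ x²/32` for `x ≤ 1`.
-/

namespace Real

lemma log_one_sub_le_neg_sub_sq_div_two {x : ℝ} (hx₀ : 0 ≤ x) (hx₁ : x < 1) :
    log (1 - x) ≤ -x - x ^ 2 / 2 := by
  have hsum := hasSum_pow_div_log_of_abs_lt_one (by rwa [abs_of_nonneg hx₀])
  have h := sum_le_hasSum (Finset.range 2) (fun n _ => by positivity) hsum
  norm_num [Finset.sum_range_succ] at h
  linarith

lemma one_sub_le_exp_neg_sub_sq_div_two {x : ℝ} (hx₀ : 0 ≤ x) (hx₁ : x ≤ 1) :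
    1 - x ≤ exp (-x - x ^ 2 / 2) := by
  rcases hx₁.lt_or_eq with hx₁ | rfl
  · exact (log_le_iff_le_exp (by linarith)).1 (log_one_sub_le_neg_sub_sq_div_two hx₀ hx₁)
  · simpa using (exp_pos _).le

lemma exp_neg_le_one_sub_add_sq {y : ℝ} (hy : 0 ≤ y) : exp (-y) ≤ 1 - y + y ^ 2 := by
  rw [exp_neg, inv_le_iff_one_le_mul₀ (exp_pos y)]
  calc 1 ≤ (1 - y + y ^ 2) * (1 + y) := by nlinarith [pow_nonneg hy 3]
    _ ≤ (1 - y + y ^ 2) * exp y := by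
      gcongr
      · nlinarith [sq_nonneg (y - 1 / 2)]
      · linarith [add_one_le_exp y]

lemma one_sub_inv_rpow_self_le_exp {t : ℝ} (ht : 1 ≤ t) :
    (1 - t⁻¹) ^ t ≤ exp (-1 - t⁻¹ / 2) := by
  have hinv : t⁻¹ ≤ 1 := inv_le_one_of_one_le₀ ht
  calc (1 - t⁻¹) ^ t ≤ exp (-t⁻¹ - t⁻¹ ^ 2 / 2) ^ t := by
        gcongr
        exact one_sub_le_exp_neg_sub_sq_div_two (by positivity) hinv
    _ = exp (-1 - t⁻¹ / 2) := by
        rw [← exp_mul]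
        congr 1
        field_simp

lemma exp_neg_one_sub_div_two_le {x : ℝ} (hx₀ : 0 ≤ x) (hx₁ : x ≤ 1) :
    exp (-1 - x / 2) ≤ exp (-1) - x ^ 2 / 32 := by
  have he : (1 : ℝ) / 3 ≤ exp (-1) := by linarith [exp_neg_one_gt_d9]
  have hhalf := exp_neg_le_one_sub_add_sq (y := x / 2) (by positivity)
  calc exp (-1 - x / 2) = exp (-1) * exp (-(x / 2)) := by rw [← exp_add]; ring_nf
    _ ≤ exp (-1) * (1 - x / 2 + (x / 2) ^ 2) := by gcongr
    _ = exp (-1) - exp (-1) * (x / 2 - x ^ 2 / 4) := by ring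
    _ ≤ exp (-1) - 1 / 3 * (x / 2 - x ^ 2 / 4) := by
        gcongr
        nlinarith
    _ ≤ exp (-1) - x ^ 2 / 32 := by nlinarith

end Real

/-- For every real `t ≥ 1`, `1 - (1 - 1/t)^t ≥ 1 - 1/e + 1/(32 t^2)`. -/
theorem stmt_0 (t : ℝ) (ht : 1 ≤ t) :
    1 - (1 - 1/t) ^ t ≥ 1 - 1 / Real.exp 1 + 1 / (32 * t ^ 2) := by
  have hinv₀ : 0 ≤ t⁻¹ := by positivity
  have hinv₁ : t⁻¹ ≤ 1 := inv_le_one_of_one_le₀ ht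
  have h := (Real.one_sub_inv_rpow_self_le_exp ht).trans
    (Real.exp_neg_one_sub_div_two_le hinv₀ hinv₁)
  rw [Real.exp_neg, inv_pow] at h
  rw [one_div, one_div, one_div, mul_inv]
  linarith
end

section
/- Let P_1, …, P_n ∈ [0,1]. Then P_n + (1−P_n)P_{n−1} + (1−P_n)(1−P_{n−1})P_{n−2} + ⋯ + (∏_{j=2}^{n}(1−P_j))·P_1 ≥ (1 − (1 − 1/n)^n) · min(1, Σ_{j=1}^n P_j). -/
lemma tele (n : ℕ) (Q : ℕ → ℝ) :
    ∑ i ∈ Finset.range n, (∏ j ∈ Finset.Ico (i+1) n, (1 - Q j)) * Q i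
      = 1 - ∏ j ∈ Finset.range n, (1 - Q j) := by
  induction n with
  | zero => simp
  | succ n ih =>
    rw [Finset.sum_range_succ, Finset.prod_range_succ]
    have h1 : ∀ i ∈ Finset.range n,
        (∏ j ∈ Finset.Ico (i+1) (n+1), (1 - Q j)) * Q i
          = (1 - Q n) * ((∏ j ∈ Finset.Ico (i+1) n, (1 - Q j)) * Q i) := by
      intro i hi
      rw [Finset.prod_Ico_succ_top (by have := Finset.mem_range.mp hi; omega)]
      ring
    rw [Finset.sum_congr rfl h1, ← Finset.mul_sum, ih]
    simp
    ring

/-- Goemans–Williamson style bound: for `P j ∈ [0,1]`,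
`Σ_i (∏_{j>i} (1 - P j)) P i ≥ (1 - (1 - 1/n)^n) · min 1 (Σ_j P j)`. -/
theorem stmt_8 (n : ℕ) (P : Fin n → ℝ) (hP : ∀ j, 0 ≤ P j ∧ P j ≤ 1) :
    ∑ i : Fin n, (∏ j ∈ Finset.univ.filter (fun j => i < j), (1 - P j)) * P i
      ≥ (1 - (1 - 1 / (n : ℝ)) ^ n) * min 1 (∑ j : Fin n, P j) := by
  rcases Nat.eq_zero_or_pos n with hn | hn
  · subst hn; simp
  have hn1 : (1:ℝ) ≤ n := by exact_mod_cast hn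
  have hnpos : (0:ℝ) < n := by linarith
  set S := ∑ j : Fin n, P j with hSdef
  have hS0 : 0 ≤ S := Finset.sum_nonneg fun j _ => (hP j).1
  have hSn : S ≤ n := by
    calc S ≤ ∑ _j : Fin n, (1:ℝ) := Finset.sum_le_sum fun j _ => (hP j).2
    _ = n := by simp
  -- step 1: telescoping
  set Q : ℕ → ℝ := fun j => if h : j < n then P ⟨j, h⟩ else 0 with hQdef
  have hQ : ∀ (j : Fin n), Q j.val = P j := by
    intro j; simp [hQdef, j.isLt]
  have key : ∑ i : Fin n, (∏ j ∈ Finset.univ.filter (fun j => i < j), (1 - P j)) * P i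
      = 1 - ∏ j : Fin n, (1 - P j) := by
    have hsum : ∑ i : Fin n, (∏ j ∈ Finset.univ.filter (fun j => i < j), (1 - P j)) * P i
        = ∑ i ∈ Finset.range n, (∏ j ∈ Finset.Ico (i+1) n, (1 - Q j)) * Q i := by
      refine Finset.sum_bij' (fun (i : Fin n) _ => i.val)
        (fun i hi => (⟨i, Finset.mem_range.mp hi⟩ : Fin n)) ?_ ?_ ?_ ?_ ?_
      · intro a _; exact Finset.mem_range.mpr a.isLt
      · intro b _; exact Finset.mem_univ _
      · intro a _; rfl
      · intro b _; rfl
      · intro a _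
        rw [hQ a]
        congr 1
        refine Finset.prod_bij' (fun (j : Fin n) _ => j.val)
          (fun j hj => (⟨j, (Finset.mem_Ico.mp hj).2⟩ : Fin n)) ?_ ?_ ?_ ?_ ?_
        · intro j hj
          simp only [Finset.mem_filter, Finset.mem_univ, true_and] at hj
          exact Finset.mem_Ico.mpr ⟨hj, j.isLt⟩
        · intro j hj
          simp only [Finset.mem_filter, Finset.mem_univ, true_and]
          exact (Finset.mem_Ico.mp hj).1
        · intro j _; rfl
        · intro j _; rfl
        · intro j _; rw [hQ j]
    rw [hsum, tele]
    congr 1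
    rw [← Fin.prod_univ_eq_prod_range]
    exact Finset.prod_congr rfl fun j _ => by rw [hQ j]
  rw [key]
  have hz : ∀ i ∈ (Finset.univ : Finset (Fin n)), (0:ℝ) ≤ 1 - P i := fun i _ => by
    linarith [(hP i).2]
  have hprod0 : 0 ≤ ∏ i : Fin n, (1 - P i) := Finset.prod_nonneg hz
  -- step 2: AM-GM
  have amgm : ∏ j : Fin n, (1 - P j) ≤ (1 - S/n)^n := by
    have hw : ∀ i ∈ (Finset.univ : Finset (Fin n)), (0:ℝ) ≤ 1/n := fun _ _ => by positivity
    have hw' : ∑ _i : Fin n, (1:ℝ)/n = 1 := by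
      rw [Finset.sum_const, Finset.card_univ, Fintype.card_fin, nsmul_eq_mul]
      field_simp
    have h := Real.geom_mean_le_arith_mean_weighted Finset.univ (fun _ => 1/n)
      (fun i => 1 - P i) hw hw' hz
    have hrhs : ∑ i : Fin n, (1:ℝ)/n * (1 - P i) = 1 - S/n := by
      rw [← Finset.mul_sum, Finset.sum_sub_distrib, ← hSdef, Finset.sum_const,
        Finset.card_univ, Fintype.card_fin, nsmul_eq_mul, mul_one]
      field_simp
    rw [hrhs, Real.finset_prod_rpow _ _ hz _] at h
    have h2 := pow_le_pow_left₀ (Real.rpow_nonneg hprod0 _) h n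
    calc ∏ j : Fin n, (1 - P j)
        = ((∏ j : Fin n, (1 - P j)) ^ ((1:ℝ)/n)) ^ n := by
          rw [← Real.rpow_natCast ((∏ j : Fin n, (1 - P j)) ^ ((1:ℝ)/n)) n,
            ← Real.rpow_mul hprod0]
          rw [one_div, inv_mul_cancel₀ (ne_of_gt hnpos), Real.rpow_one]
      _ ≤ (1 - S/n)^n := h2
  -- step 3: concavity / monotonicity
  have hbase : 0 ≤ (1:ℝ) - 1/(n:ℝ) := by
    rw [sub_nonneg, div_le_one hnpos]; exact hn1
  rcases le_total S 1 with hS1 | hS1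
  · rw [min_eq_right hS1]
    -- convexity of x^n on [0,∞): (1 - S/n)^n = ((1-S)*1 + S*(1-1/n))^n ≤ (1-S)*1 + S*(1-1/n)^n
    have hconv := (convexOn_pow (𝕜 := ℝ) n).2 (Set.mem_Ici.mpr (by norm_num : (0:ℝ) ≤ 1))
      (Set.mem_Ici.mpr hbase) (by linarith : (0:ℝ) ≤ 1 - S) hS0 (by ring)
    have heq : (1 - S) • (1:ℝ) + S • (1 - 1/(n:ℝ)) = 1 - S/n := by
      simp only [smul_eq_mul]; ring
    rw [heq] at hconv
    simp only [smul_eq_mul, one_pow, mul_one] at hconv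
    nlinarith [amgm]
  · rw [min_eq_left hS1]
    have hmono : (1 - S/n)^n ≤ (1 - 1/n)^n := by
      apply pow_le_pow_left₀
      · rw [sub_nonneg, div_le_one hnpos]; exact hSn
      · apply sub_le_sub_left
        rw [div_le_div_iff₀ hnpos hnpos]  -- 1/n ≤ S/n
        nlinarith
    nlinarith [amgm]
end

section
/- (Recursive bound for ρ-fold coverage, base case n bins.) Let P_1, …, P_n ∈ [0,1] and define Q(1) = Σ_{j=1}^{n} (∏_{j'=j+1}^{n} (1 − P_{j'}))·P_j. Then Q(1) ≥ (1 − 1/e + 1/(32 n^2))·min(1, Σ_{j=1}^n P_j). -/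
open Finset

/-- Telescoping identity. -/
lemma tele_aux : ∀ (n : ℕ) (P : Fin n → ℝ),
    ∑ j : Fin n, (∏ j' ∈ Finset.univ.filter (fun j' => j < j'), (1 - P j')) * P j
      = 1 - ∏ j : Fin n, (1 - P j) := by
  intro n
  induction n with
  | zero => intro P; simp
  | succ m ih =>
    intro P
    rw [Fin.sum_univ_succ, Fin.prod_univ_succ]
    have h0 : ∏ j' ∈ Finset.univ.filter (fun j' => (0 : Fin (m+1)) < j'), (1 - P j')
        = ∏ k : Fin m, (1 - P k.succ) := by
      rw [Finset.prod_filter, Fin.prod_univ_succ]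
      simp [Fin.succ_pos]
    have hs : ∀ i : Fin m,
        ∏ j' ∈ Finset.univ.filter (fun j' => i.succ < j'), (1 - P j')
        = ∏ k ∈ Finset.univ.filter (fun k => i < k), (1 - P k.succ) := by
      intro i
      rw [Finset.prod_filter, Finset.prod_filter, Fin.prod_univ_succ]
      simp [Fin.succ_lt_succ_iff]
    have hsum : ∑ i : Fin m,
        (∏ j' ∈ Finset.univ.filter (fun j' => i.succ < j'), (1 - P j')) * P i.succ
        = 1 - ∏ k : Fin m, (1 - P k.succ) := by
      rw [← ih (fun k => P k.succ)]
      exact Finset.sum_congr rfl fun i _ => by rw [hs i]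
    rw [h0, hsum]
    ring

/-- 1 - x ≤ exp (-(x + x^2/2)) for 0 ≤ x ≤ 1/2. -/
lemma one_sub_le_exp_aux {x : ℝ} (hx0 : 0 ≤ x) (hx : x ≤ 1/2) :
    1 - x ≤ Real.exp (-(x + x^2/2)) := by
  set t : ℝ := x + x^2/2 with ht
  have ht0 : 0 ≤ t := by positivity
  have ht1 : t ≤ 1 := by
    have hx2 : x^2 ≤ 1/4 := by nlinarith [sq_nonneg (x - 1/2)]
    rw [ht]; linarith
  have habs : |(-t : ℝ)| ≤ 1 := by rw [abs_neg, abs_of_nonneg ht0]; exact ht1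
  have hb := Real.exp_bound habs (n := 3) (by norm_num)
  have hsum : ∑ m ∈ Finset.range 3, (-t) ^ m / m.factorial = 1 - t + t^2/2 := by
    simp [Finset.sum_range_succ, Nat.factorial]
    ring
  rw [hsum] at hb
  have habsn : |(-t : ℝ)| = t := by rw [abs_neg, abs_of_nonneg ht0]
  rw [habsn] at hb
  have hlow := (abs_sub_le_iff.mp hb).2
  norm_num [Nat.factorial] at hlow
  have : 1 - x ≤ 1 - t + t^2/2 - t^3 * (2/9) := by
    rw [ht]; nlinarith [sq_nonneg x, pow_nonneg hx0 3, pow_nonneg hx0 4]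
  linarith

/-- exp (-u) ≤ 1 - u + u^2/2 + 2u^3/9 for 0 ≤ u ≤ 1. -/
lemma exp_neg_le_aux {u : ℝ} (hu0 : 0 ≤ u) (hu : u ≤ 1) :
    Real.exp (-u) ≤ 1 - u + u^2/2 + u^3 * (2/9) := by
  have habs : |(-u : ℝ)| ≤ 1 := by rw [abs_neg, abs_of_nonneg hu0]; exact hu
  have hb := Real.exp_bound habs (n := 3) (by norm_num)
  have hsum : ∑ m ∈ Finset.range 3, (-u) ^ m / m.factorial = 1 - u + u^2/2 := by
    simp [Finset.sum_range_succ, Nat.factorial]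
    ring
  rw [hsum] at hb
  have habsn : |(-u : ℝ)| = u := by rw [abs_neg, abs_of_nonneg hu0]
  rw [habsn] at hb
  have hup := (abs_sub_le_iff.mp hb).1
  norm_num [Nat.factorial] at hup
  linarith

/-- The key numeric bound: (1 - 1/n)^n ≤ 1/e - 1/(32 n^2) for n ≥ 1. -/
lemma keyA (n : ℕ) (hn : 1 ≤ n) :
    (1 - 1/(n:ℝ))^n ≤ 1 / Real.exp 1 - 1 / (32 * (n:ℝ)^2) := by
  have he1 : Real.exp 1 < 2.7182818286 := Real.exp_one_lt_d9
  have he2 : (2.7182818283 : ℝ) < Real.exp 1 := Real.exp_one_gt_d9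
  have hepos : 0 < Real.exp 1 := Real.exp_pos 1
  rcases eq_or_lt_of_le hn with h1 | h2
  · -- n = 1
    subst h1
    norm_num
    rw [le_inv_comm₀ (by norm_num) hepos]
    linarith
  · -- n ≥ 2
    have hn2 : 2 ≤ n := h2
    have hnR : (2:ℝ) ≤ (n:ℝ) := by exact_mod_cast hn2
    have hnpos : (0:ℝ) < n := by linarith
    set x : ℝ := 1/(n:ℝ) with hxdef
    have hx0 : 0 < x := by positivity
    have hx12 : x ≤ 1/2 := by
      rw [hxdef]
      rw [div_le_div_iff₀ hnpos (by norm_num)]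
      linarith
    have h1x : 0 ≤ 1 - x := by linarith
    have step1 : (1 - x)^n ≤ Real.exp (-(1 + 1/(2*(n:ℝ)))) := by
      calc (1 - x)^n ≤ (Real.exp (-(x + x^2/2)))^n :=
            pow_le_pow_left₀ h1x (one_sub_le_exp_aux hx0.le hx12) n
        _ = Real.exp ((n:ℝ) * (-(x + x^2/2))) := (Real.exp_nat_mul _ n).symm
        _ = Real.exp (-(1 + 1/(2*(n:ℝ)))) := by
            congr 1
            rw [hxdef]
            field_simp
    set u : ℝ := 1/(2*(n:ℝ)) with hudef
    have hu0 : 0 < u := by positivity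
    have hu14 : u ≤ 1/4 := by
      rw [hudef, div_le_div_iff₀ (by positivity) (by norm_num)]
      linarith
    have step2 : Real.exp (-(1 + u)) = Real.exp (-1) * Real.exp (-u) := by
      rw [← Real.exp_add]; ring_nf
    have step3 : Real.exp (-u) ≤ 1 - u + u^2/2 + u^3 * (2/9) :=
      exp_neg_le_aux hu0.le (by linarith)
    have hexpneg : Real.exp (-1) = 1 / Real.exp 1 := by
      rw [Real.exp_neg]; ring
    have hein : (1:ℝ)/3 ≤ Real.exp (-1) := by
      rw [hexpneg, div_le_div_iff₀ (by norm_num) hepos]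
      linarith
    have heup : Real.exp (-1) ≤ 1 := by
      rw [hexpneg]
      rw [div_le_one hepos]; linarith
    have hu2 : 1 / (32 * (n:ℝ)^2) = u^2 / 8 := by
      rw [hudef]; field_simp; ring
    have final : Real.exp (-1) * (1 - u + u^2/2 + u^3 * (2/9)) ≤ 1 / Real.exp 1 - u^2/8 := by
      rw [← hexpneg]
      have hkey : u^2/8 ≤ Real.exp (-1) * (u - u^2/2 - u^3 * (2/9)) := by
        have h1 : (3/4) * u ≤ u - u^2/2 - u^3*(2/9) := by nlinarith [sq_nonneg u]
        have h2 : (1/3) * ((3/4)*u) ≤ Real.exp (-1) * (u - u^2/2 - u^3*(2/9)) :=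
          mul_le_mul hein h1 (by positivity) (Real.exp_pos _).le
        nlinarith
      nlinarith
    calc (1 - x)^n ≤ Real.exp (-(1 + u)) := step1
      _ = Real.exp (-1) * Real.exp (-u) := step2
      _ ≤ Real.exp (-1) * (1 - u + u^2/2 + u^3 * (2/9)) := by
          apply mul_le_mul_of_nonneg_left step3 (Real.exp_pos _).le
      _ ≤ 1 / Real.exp 1 - u^2/8 := final
      _ = 1 / Real.exp 1 - 1 / (32 * (n:ℝ)^2) := by rw [hu2]

/-- Base case of the ρ-fold coverage bound: for `P j ∈ [0,1]` and `n ≥ 1`,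
`Q(1) = Σ_j (∏_{j'>j} (1 - P j')) P j ≥ (1 - 1/e + 1/(32 n^2)) · min 1 (Σ_j P j)`. -/
theorem stmt_14 (n : ℕ) (hn : 1 ≤ n) (P : Fin n → ℝ) (hP : ∀ j, 0 ≤ P j ∧ P j ≤ 1) :
    ∑ j : Fin n, (∏ j' ∈ Finset.univ.filter (fun j' => j < j'), (1 - P j')) * P j
      ≥ (1 - 1 / Real.exp 1 + 1 / (32 * (n : ℝ) ^ 2)) * min 1 (∑ j : Fin n, P j) := by
  have hnpos : (0:ℝ) < n := by exact_mod_cast hn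
  set S : ℝ := ∑ j : Fin n, P j with hSdef
  have hS0 : 0 ≤ S := Finset.sum_nonneg fun j _ => (hP j).1
  have hSn : S ≤ n := by
    calc S ≤ ∑ _j : Fin n, (1:ℝ) := Finset.sum_le_sum fun j _ => (hP j).2
      _ = n := by simp
  have hden0 : 0 ≤ 1 - S/(n:ℝ) := by
    rw [sub_nonneg, div_le_one hnpos]; exact hSn
  -- AM-GM : ∏ (1 - P j) ≤ (1 - S/n)^n
  have hamgm : ∏ j : Fin n, (1 - P j) ≤ (1 - S/(n:ℝ))^n := by
    have hw : ∀ j ∈ (Finset.univ : Finset (Fin n)), (0:ℝ) ≤ 1/(n:ℝ) := fun _ _ => by positivity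
    have hw' : ∑ _j : Fin n, (1:ℝ)/(n:ℝ) = 1 := by
      rw [Finset.sum_const, Finset.card_univ, Fintype.card_fin, nsmul_eq_mul, mul_one_div]
      exact div_self (ne_of_gt hnpos)
    have hz : ∀ j ∈ (Finset.univ : Finset (Fin n)), (0:ℝ) ≤ 1 - P j := fun j _ => by
      have := (hP j).2; linarith
    have hgm := Real.geom_mean_le_arith_mean_weighted Finset.univ
      (fun _ => 1/(n:ℝ)) (fun j => 1 - P j) hw hw' hz
    have hrhs : ∑ j : Fin n, (1/(n:ℝ)) * (1 - P j) = 1 - S/(n:ℝ) := by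
      rw [← Finset.mul_sum, Finset.sum_sub_distrib, Finset.sum_const, Finset.card_univ,
        Fintype.card_fin, nsmul_eq_mul, mul_one, ← hSdef]
      field_simp
    rw [hrhs] at hgm
    have hprodeq : ∏ j : Fin n, (1 - P j) ^ ((1:ℝ)/(n:ℝ))
        = (∏ j : Fin n, (1 - P j)) ^ ((1:ℝ)/(n:ℝ)) := by
      rw [← Real.finset_prod_rpow Finset.univ _ hz]
    rw [hprodeq] at hgm
    have hppos : 0 ≤ ∏ j : Fin n, (1 - P j) := Finset.prod_nonneg hz
    calc ∏ j : Fin n, (1 - P j)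
        = ((∏ j : Fin n, (1 - P j)) ^ ((1:ℝ)/(n:ℝ))) ^ (n:ℕ) := by
          rw [← Real.rpow_natCast ((∏ j : Fin n, (1 - P j)) ^ ((1:ℝ)/(n:ℝ))) n,
            ← Real.rpow_mul hppos, one_div_mul_cancel (ne_of_gt hnpos), Real.rpow_one]
      _ ≤ (1 - S/(n:ℝ))^n := by
          exact pow_le_pow_left₀ (Real.rpow_nonneg hppos _) hgm n
  have hA := keyA n hn
  have htele := tele_aux n P
  rw [htele, ge_iff_le]
  rcases le_total 1 S with hS1 | hS1
  · -- S ≥ 1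
    rw [min_eq_left hS1]
    have hmono : (1 - S/(n:ℝ))^n ≤ (1 - 1/(n:ℝ))^n := by
      apply pow_le_pow_left₀ hden0
      have : 1/(n:ℝ) ≤ S/(n:ℝ) := by gcongr
      linarith
    nlinarith
  · -- S ≤ 1
    rw [min_eq_right hS1]
    have hy : (1 - 1/(n:ℝ)) ∈ Set.Ici (0:ℝ) := by
      have : 1/(n:ℝ) ≤ 1 := by rw [div_le_one hnpos]; exact_mod_cast hn
      simp only [Set.mem_Ici]; linarith
    have hconv := (convexOn_pow (𝕜 := ℝ) n).2 (x := 1) (y := 1 - 1/(n:ℝ))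
      (Set.mem_Ici.mpr (by norm_num : (0:ℝ) ≤ 1)) hy
      (by linarith : (0:ℝ) ≤ 1 - S) hS0 (by ring)
    simp only [smul_eq_mul, mul_one, one_pow] at hconv
    have heq : 1 - S + S * (1 - 1/(n:ℝ)) = 1 - S/(n:ℝ) := by
      field_simp; ring
    rw [heq] at hconv
    nlinarith
end
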